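/- arXiv:2303.06299 — 2 statements merged into one kernel-verified Lean document; each statement's English description precedes it below -/
import Mathlib

section
/- There is no graph G whose i-graph is isomorphic to the graph κ obtained from K_{2,3} by subdividing one edge (the theta graph Θ(2,2,3)). -/
open Finset

variable {V : Type*}

/-- `S` is an independent dominating (equivalently, maximal independent) set of `G`. -/
def IndepDom (G : SimpleGraph V) (S : Finset V) : Prop :=
  (∀ ⦃x⦄, x ∈ S → ∀ ⦃y⦄, y ∈ S → ¬ G.Adj x y) ∧ ∀ v, v ∉ S → ∃ u ∈ S, G.Adj u v

/-- The independent domination number `i(G)`. -/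
noncomputable def iNum (G : SimpleGraph V) : ℕ :=
  sInf {n | ∃ S : Finset V, IndepDom G S ∧ S.card = n}

/-- An `i`-set: a maximal independent set of minimum cardinality. -/
def IsISet (G : SimpleGraph V) (S : Finset V) : Prop :=
  IndepDom G S ∧ S.card = iNum G

/-- The `i`-graph of `G`: vertices are the `i`-sets of `G`, two of them adjacent iff their
symmetric difference is a pair of adjacent vertices of `G`. -/
def iGraph (G : SimpleGraph V) [DecidableEq V] : SimpleGraph {S : Finset V // IsISet G S} where
  Adj X Y := ∃ x y, G.Adj x y ∧ symmDiff X.1 Y.1 = {x, y}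
  symm := by
    constructor
    rintro X Y ⟨x, y, hxy, h⟩
    exact ⟨x, y, hxy, by rwa [symmDiff_comm]⟩
  loopless := by
    constructor
    rintro X ⟨x, y, hxy, h⟩
    rw [symmDiff_self] at h
    exact (Finset.insert_ne_empty x {y}) (by simpa [eq_comm] using h)

/-- The graph `κ = Θ(2,2,3)`: `K_{2,3}` with one edge subdivided.  Here `0 = X`, `1 = Y`,
`2 = A`, `3 = B`, `4 = C₁`, `5 = C₂`, with paths `0-2-1`, `0-3-1` and `0-4-5-1`. -/
def kappaGraph : SimpleGraph (Fin 6) :=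
  SimpleGraph.fromEdgeSet {s(0,2), s(2,1), s(0,3), s(3,1), s(0,4), s(4,5), s(5,1)}

/-!
Two `i`-sets have the same size, and if `|S ∆ T| = 2` then `T = S - w + z`, where the vertex of `S`
dominating `z` can only be `w` because the rest of `S` lies in the independent set `T`. So the
`i`-graph is an induced subgraph of the graph on finite sets joining two sets whose symmetric
difference has two elements. That graph contains no induced `Θ(2,2,3)`: replacing every set `N` by
`X ∆ N`, where `X` is an end of the theta, the middle vertices `A`, `B` of the two short paths become
disjoint pairs that fill the four-element set `X ∆ Y`, and the first vertex `C` of the long path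
becomes a pair disjoint from both. Hence `|C ∆ Y| = 6`, while the path `C - C' - Y` gives
`|C ∆ Y| ≤ 4`.
-/

open scoped symmDiff

namespace Finset

variable {α : Type*} [DecidableEq α]

theorem card_symmDiff_add_two_mul_card_inter (s t : Finset α) :
    #(s ∆ t) + 2 * #(s ∩ t) = #s + #t := by
  have hsub : s ∩ t ⊆ s ∪ t := inter_subset_left.trans subset_union_left
  rw [symmDiff_eq_sup_sdiff_inf, sup_eq_union, inf_eq_inter, card_sdiff_of_subset hsub]
  have := card_union_add_card_inter s t
  have := card_le_card hsub
  omega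

theorem card_symmDiff_le_add (s t u : Finset α) : #(s ∆ u) ≤ #(s ∆ t) + #(t ∆ u) :=
  (card_le_card (symmDiff_triangle s t u)).trans (card_union_le _ _)

theorem subset_of_card_symmDiff_add_card_eq {s t : Finset α} (h : #(s ∆ t) + #s = #t) :
    s ⊆ t := by
  have hinter : #(s ∩ t) = #s := by
    have := card_symmDiff_add_two_mul_card_inter s t
    omega
  rw [← eq_of_subset_of_card_le inter_subset_left hinter.ge]
  exact inter_subset_right

theorem disjoint_of_card_eq_two_of_card_symmDiff_ne {s t : Finset α} (hs : #s = 2) (ht : #t = 2)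
    (h0 : #(s ∆ t) ≠ 0) (h2 : #(s ∆ t) ≠ 2) : Disjoint s t := by
  have := card_symmDiff_add_two_mul_card_inter s t
  have := card_le_card (inter_subset_left (s₁ := s) (s₂ := t))
  rw [disjoint_iff_inter_eq_empty, ← card_eq_zero]
  omega

theorem card_symmDiff_of_disjoint {s t : Finset α} (h : Disjoint s t) : #(s ∆ t) = #s + #t := by
  rw [h.symmDiff_eq_sup, sup_eq_union, card_union_of_disjoint h]

end Finset

def symmDiffTwoGraph (α : Type*) [DecidableEq α] : SimpleGraph (Finset α) where
  Adj s t := #(s ∆ t) = 2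
  symm := ⟨fun s t h => by rwa [symmDiff_comm]⟩
  loopless := ⟨fun s h => by simp at h⟩

theorem symmDiffTwoGraph_adj {α : Type*} [DecidableEq α] {s t : Finset α} :
    (symmDiffTwoGraph α).Adj s t ↔ #(s ∆ t) = 2 :=
  Iff.rfl

theorem isEmpty_kappaGraph_embedding_symmDiffTwoGraph (α : Type*) [DecidableEq α] :
    IsEmpty (kappaGraph ↪g symmDiffTwoGraph α) := by
  refine ⟨fun φ => ?_⟩
  have adj (i j : Fin 6) (h : kappaGraph.Adj i j := by simp [kappaGraph]) :
      #(φ i ∆ φ j) = 2 :=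
    symmDiffTwoGraph_adj.1 (φ.map_adj_iff.2 h)
  have far (i j : Fin 6) (hij : i ≠ j := by decide)
      (h : ¬ kappaGraph.Adj i j := by simp [kappaGraph]) :
      #(φ i ∆ φ j) ≠ 0 ∧ #(φ i ∆ φ j) ≠ 2 :=
    ⟨by simpa [symmDiff_eq_bot] using φ.injective.ne hij,
      symmDiffTwoGraph_adj.not.1 (φ.map_adj_iff.not.2 h)⟩
  have centre (i j : Fin 6) : (φ 0 ∆ φ i) ∆ (φ 0 ∆ φ j) = φ i ∆ φ j := by
    rw [symmDiff_symmDiff_symmDiff_comm, symmDiff_self, bot_symmDiff]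
  have disjoint (i j : Fin 6) (hi : kappaGraph.Adj 0 i := by simp [kappaGraph])
      (hj : kappaGraph.Adj 0 j := by simp [kappaGraph]) (hij : i ≠ j := by decide)
      (h : ¬ kappaGraph.Adj i j := by simp [kappaGraph]) :
      Disjoint (φ 0 ∆ φ i) (φ 0 ∆ φ j) := by
    obtain ⟨h0, h2⟩ := far i j hij h
    rw [← centre] at h0 h2
    exact disjoint_of_card_eq_two_of_card_symmDiff_ne (adj 0 i hi) (adj 0 j hj) h0 h2
  have hy : #(φ 0 ∆ φ 1) = 4 := by
    have := card_symmDiff_add_two_mul_card_inter (φ 0 ∆ φ 2) (φ 2 ∆ φ 1)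
    rw [symmDiff_assoc, symmDiff_symmDiff_cancel_left, adj 0 2, adj 2 1] at this
    have := far 0 1
    omega
  have hAY : φ 0 ∆ φ 2 ⊆ φ 0 ∆ φ 1 :=
    subset_of_card_symmDiff_add_card_eq (by rw [centre, adj 2 1, adj 0 2, hy])
  have hBY : φ 0 ∆ φ 3 ⊆ φ 0 ∆ φ 1 :=
    subset_of_card_symmDiff_add_card_eq (by rw [centre, adj 3 1, adj 0 3, hy])
  have hABY : φ 0 ∆ φ 2 ∪ φ 0 ∆ φ 3 = φ 0 ∆ φ 1 :=
    eq_of_subset_of_card_le (union_subset hAY hBY)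
      (by rw [card_union_of_disjoint (disjoint 2 3), adj 0 2, adj 0 3, hy])
  have hCY : Disjoint (φ 0 ∆ φ 4) (φ 0 ∆ φ 1) :=
    hABY ▸ disjoint_union_right.2 ⟨disjoint 4 2, disjoint 4 3⟩
  have hfar := card_symmDiff_of_disjoint hCY
  rw [centre, adj 0 4, hy] at hfar
  have hnear := card_symmDiff_le_add (φ 4) (φ 5) (φ 1)
  rw [adj 4 5, adj 5 1] at hnear
  omega

theorem IsISet.card_eq {G : SimpleGraph V} {S T : Finset V} (hS : IsISet G S)
    (hT : IsISet G T) : #S = #T :=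
  hS.2.trans hT.2.symm

theorem IndepDom.adj_of_sdiff_eq_singleton [DecidableEq V] {G : SimpleGraph V} {S T : Finset V}
    {w z : V} (hS : IndepDom G S) (hT : IndepDom G T) (hST : S \ T = {w}) (hTS : T \ S = {z}) :
    G.Adj w z := by
  obtain ⟨hzT, hzS⟩ := mem_sdiff.1 (hTS ▸ mem_singleton_self z)
  obtain ⟨u, huS, huz⟩ := hS.2 z hzS
  by_cases huT : u ∈ T
  · exact absurd huz (hT.1 huT hzT)
  · obtain rfl : u = w := mem_singleton.1 (hST ▸ mem_sdiff.2 ⟨huS, huT⟩)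
    exact huz

theorem iGraph_adj_iff [DecidableEq V] {G : SimpleGraph V} {S T : {S // IsISet G S}} :
    (iGraph G).Adj S T ↔ #(S.1 ∆ T.1) = 2 := by
  refine ⟨fun ⟨x, y, hxy, h⟩ => h ▸ card_pair hxy.ne, fun h => ?_⟩
  rw [symmDiff_def, sup_eq_union, card_union_of_disjoint disjoint_sdiff_sdiff] at h
  have hcomm : #(S.1 \ T.1) = #(T.1 \ S.1) := card_sdiff_comm (S.2.card_eq T.2)
  obtain ⟨w, hw⟩ := card_eq_one.1 (by omega : #(S.1 \ T.1) = 1)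
  obtain ⟨z, hz⟩ := card_eq_one.1 (by omega : #(T.1 \ S.1) = 1)
  refine ⟨w, z, S.2.1.adj_of_sdiff_eq_singleton T.2.1 hw hz, ?_⟩
  rw [symmDiff_def, sup_eq_union, hw, hz, insert_eq]

def iGraphEmbedding [DecidableEq V] (G : SimpleGraph V) : iGraph G ↪g symmDiffTwoGraph V where
  toEmbedding := Function.Embedding.subtype _
  map_rel_iff' := iGraph_adj_iff.symm

/-- No graph has `κ = Θ(2,2,3)` as its `i`-graph. -/
theorem kappa_not_iGraph :
    ∀ (V : Type) [Fintype V] [DecidableEq V] (G : SimpleGraph V),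
      IsEmpty (iGraph G ≃g kappaGraph) :=
  fun V _ _ G => ⟨fun e => (isEmpty_kappaGraph_embedding_symmDiffTwoGraph V).false
    (e.symm.toEmbedding.trans (iGraphEmbedding G))⟩
end

section
/- For any graph H there exists a graph G with ℐ(G) ≅ ℐ(H) such that for every i-set S of G and every v ∈ S, the external private neighbourhood epn(v,S) is nonempty. Specifically, if S is an i-set of H with v ∈ S and epn(v,S) = ∅, the graph G₁ obtained from H by adding two new vertices a, b each joined to every vertex of N[v] satisfies: the i-sets of G₁ are exactly the i-sets of H, i(G₁) = i(H), and epn_{G₁}(v,S) = {a,b}. -/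
open Finset

variable {V : Type*}

/-- The closed neighbourhood `N[v]` of `v`, as a set. -/
def closedNbr (G : SimpleGraph V) (v : V) : Set V := {u | u = v ∨ G.Adj v u}

/-- The private neighbourhood `pn(v,S) = N[v] − N[S − {v}]`. -/
def pn (G : SimpleGraph V) (v : V) (S : Finset V) : Set V :=
  closedNbr G v \ ⋃ w ∈ (S : Set V) \ {v}, closedNbr G w

/-- The external private neighbourhood `epn(v,S) = pn(v,S) − {v}`. -/
def epn (G : SimpleGraph V) (v : V) (S : Finset V) : Set V := pn G v S \ {v}

/-- The graph obtained from `H` by adding two new vertices each joined to every vertex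
of `N[v]`. -/
def addTwins (H : SimpleGraph V) (v : V) : SimpleGraph (V ⊕ Fin 2) where
  Adj a b := match a, b with
    | Sum.inl a, Sum.inl b => H.Adj a b
    | Sum.inl a, Sum.inr _ => a = v ∨ H.Adj a v
    | Sum.inr _, Sum.inl b => b = v ∨ H.Adj b v
    | Sum.inr _, Sum.inr _ => False
  symm := by constructor; rintro (a | i) (b | j) h
             · exact h.symm
             · exact h
             · exact h
             · exact h
  loopless := by constructor; rintro (a | i) h
                 · exact H.loopless.irrefl a h
                 · exact h

/-! If `v ∈ S` has no external private neighbour, add two nonadjacent twins `a, b` joined to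
`N[v]`. A maximal independent set of the new graph that contains a twin contains both (they have
the same neighbourhood) and misses `N[v]`, so trading `{a, b}` for `v` yields a strictly smaller
maximal independent set of `H`. Hence the `i`-sets do not change, `a` and `b` become external
private neighbours of `v` with respect to `S`, and no new pair (`i`-set, vertex with empty `epn`)
appears. Repeating this decreases the number of such pairs until none is left. -/

section IndependentDomination

variable {G : SimpleGraph V} {S : Finset V}

theorem nonadj_insert [DecidableEq V] {u : V}
    (hS : ∀ ⦃x⦄, x ∈ S → ∀ ⦃y⦄, y ∈ S → ¬ G.Adj x y) (hu : ∀ x ∈ S, ¬ G.Adj x u) :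
    ∀ ⦃x⦄, x ∈ insert u S → ∀ ⦃y⦄, y ∈ insert u S → ¬ G.Adj x y := by
  simp only [mem_insert]
  rintro x (rfl | hx) y (rfl | hy)
  · exact G.loopless.irrefl _
  · exact fun h => hu y hy h.symm
  · exact hu x hx
  · exact hS hx hy

theorem indepDom_of_maximal
    (hS : Maximal (fun T : Finset V => ∀ ⦃x⦄, x ∈ T → ∀ ⦃y⦄, y ∈ T → ¬ G.Adj x y) S) :
    IndepDom G S := by
  classical
  refine ⟨hS.1, fun u hu => ?_⟩
  by_contra! hfree
  exact hu (hS.2 (nonadj_insert hS.1 hfree) (subset_insert u S) (mem_insert_self u S))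

theorem exists_indepDom [Finite V] (G : SimpleGraph V) : ∃ S, IndepDom G S := by
  obtain ⟨S, -, hS⟩ := Finite.exists_le_maximal
    (p := fun T : Finset V => ∀ ⦃x⦄, x ∈ T → ∀ ⦃y⦄, y ∈ T → ¬ G.Adj x y)
    (a := ∅) (by simp)
  exact ⟨S, indepDom_of_maximal hS⟩

theorem iNum_le_card (hS : IndepDom G S) : iNum G ≤ S.card :=
  Nat.sInf_le ⟨S, hS, rfl⟩

theorem exists_isISet [Finite V] (G : SimpleGraph V) : ∃ S, IsISet G S := by
  obtain ⟨S, hS⟩ := exists_indepDom G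
  exact Nat.sInf_mem (s := {n | ∃ S : Finset V, IndepDom G S ∧ S.card = n}) ⟨_, S, hS, rfl⟩

end IndependentDomination

namespace addTwins

variable {H : SimpleGraph V} {v a b : V} {i : Fin 2}

@[simp] theorem adj_inl_inl : (addTwins H v).Adj (.inl a) (.inl b) ↔ H.Adj a b := Iff.rfl
@[simp] theorem adj_inl_inr : (addTwins H v).Adj (.inl a) (.inr i) ↔ a = v ∨ H.Adj a v := Iff.rfl

variable {T : Finset (V ⊕ Fin 2)}

theorem indepDom_toLeft (hT : IndepDom (addTwins H v) T) (hR : T.toRight = ∅) :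
    IndepDom H T.toLeft := by
  refine ⟨fun x hx y hy => hT.1 (mem_toLeft.1 hx) (mem_toLeft.1 hy), fun u hu => ?_⟩
  obtain ⟨w | i, hw, huw⟩ := hT.2 (.inl u) (mt mem_toLeft.2 hu)
  · exact ⟨w, mem_toLeft.2 hw, huw⟩
  · exact absurd (mem_toRight.2 hw) (hR ▸ notMem_empty i)

theorem toRight_eq_univ (hT : IndepDom (addTwins H v) T) (hi : .inr i ∈ T) :
    T.toRight = univ := by
  refine eq_univ_iff_forall.2 fun j => mem_toRight.2 ?_
  by_contra hj
  obtain ⟨w | k, hw, hwj⟩ := hT.2 (.inr j) hj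
  · exact hT.1 hw hi hwj
  · exact hwj

variable [DecidableEq V]

theorem indepDom_image_inl {S : Finset V} (hS : IndepDom H S) :
    IndepDom (addTwins H v) (S.image Sum.inl) := by
  refine ⟨?_, ?_⟩
  · simp only [mem_image]
    rintro _ ⟨x, hx, rfl⟩ _ ⟨y, hy, rfl⟩
    exact hS.1 hx hy
  · rintro (u | i) hu
    · obtain ⟨w, hw, huw⟩ := hS.2 u fun h => hu (mem_image_of_mem _ h)
      exact ⟨.inl w, mem_image_of_mem _ hw, huw⟩
    · by_cases hv : v ∈ S
      · exact ⟨.inl v, mem_image_of_mem _ hv, Or.inl rfl⟩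
      · obtain ⟨w, hw, hwv⟩ := hS.2 v hv
        exact ⟨.inl w, mem_image_of_mem _ hw, Or.inr hwv⟩

theorem indepDom_insert_toLeft (hT : IndepDom (addTwins H v) T)
    (hi : .inr i ∈ T) : IndepDom H (insert v T.toLeft) := by
  have hfar : ∀ x ∈ T.toLeft, ¬ H.Adj x v := fun x hx hxv =>
    hT.1 (mem_toLeft.1 hx) hi (Or.inr hxv)
  refine ⟨nonadj_insert (fun x hx y hy => hT.1 (mem_toLeft.1 hx) (mem_toLeft.1 hy)) hfar,
    fun u hu => ?_⟩
  rw [mem_insert, not_or] at hu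
  by_cases hvu : H.Adj v u
  · exact ⟨v, mem_insert_self v _, hvu⟩
  obtain ⟨w | k, hw, hwu⟩ := hT.2 (.inl u) (mt mem_toLeft.2 hu.2)
  · exact ⟨w, mem_insert_of_mem (mem_toLeft.2 hw), hwu⟩
  · exact (hwu.resolve_left hu.1 |>.symm |> hvu).elim

theorem iNum_lt_card_of_inr_mem (hT : IndepDom (addTwins H v) T)
    (hi : .inr i ∈ T) : iNum H < T.card := by
  have hv : v ∉ T.toLeft := fun hv => hT.1 (mem_toLeft.1 hv) hi (Or.inl rfl)
  calc iNum H ≤ (insert v T.toLeft).card := iNum_le_card (indepDom_insert_toLeft hT hi)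
    _ = T.toLeft.card + 1 := card_insert_of_notMem hv
    _ < T.toLeft.card + T.toRight.card := by simp [toRight_eq_univ hT hi]
    _ = T.card := card_toLeft_add_card_toRight

theorem iNum_eq [Finite V] : iNum (addTwins H v) = iNum H := by
  obtain ⟨S, hS, hSc⟩ := exists_isISet H
  obtain ⟨T, hT, hTc⟩ := exists_isISet (addTwins H v)
  refine le_antisymm ?_ (hTc ▸ ?_)
  · calc iNum (addTwins H v) ≤ (S.image Sum.inl).card := iNum_le_card (indepDom_image_inl hS)
      _ = iNum H := by rw [card_image_of_injective _ Sum.inl_injective, hSc]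
  obtain hR | ⟨i, hi⟩ := T.toRight.eq_empty_or_nonempty
  · exact (iNum_le_card (indepDom_toLeft hT hR)).trans card_toLeft_le
  · exact (iNum_lt_card_of_inr_mem hT (mem_toRight.1 hi)).le

theorem eq_image_inl_toLeft (hR : T.toRight = ∅) : T = T.toLeft.image Sum.inl := by
  calc T = T.toLeft.map .inl :=
        (subset_map_inl.2 ⟨subset_rfl, hR⟩).antisymm
          (map_inl_subset_iff_subset_toLeft.2 subset_rfl)
    _ = T.toLeft.image Sum.inl := map_eq_image _ _

theorem isISet_iff [Finite V] :
    IsISet (addTwins H v) T ↔ ∃ T₀ : Finset V, IsISet H T₀ ∧ T = T₀.image Sum.inl := by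
  constructor
  · rintro ⟨hT, hTc⟩
    rw [iNum_eq] at hTc
    have hR : T.toRight = ∅ := eq_empty_of_forall_notMem fun i hi =>
      (iNum_lt_card_of_inr_mem hT (mem_toRight.1 hi)).ne' hTc
    refine ⟨T.toLeft, ⟨indepDom_toLeft hT hR, ?_⟩, eq_image_inl_toLeft hR⟩
    rw [← hTc, ← card_toLeft_add_card_toRight (u := T), hR, card_empty, add_zero]
  · rintro ⟨T₀, ⟨hT₀, hc⟩, rfl⟩
    refine ⟨indepDom_image_inl hT₀, ?_⟩
    rw [card_image_of_injective _ Sum.inl_injective, hc, iNum_eq]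

@[simp] theorem inl_mem_epn_image_inl {S : Finset V} {u x : V} :
    .inl x ∈ epn (addTwins H v) (.inl u) (S.image Sum.inl) ↔ x ∈ epn H u S := by
  simp [epn, pn, closedNbr]

theorem epn_inl_image_inl {S : Finset V} (hS : IndepDom H S) (hv : v ∈ S) (h0 : epn H v S = ∅) :
    epn (addTwins H v) (.inl v) (S.image Sum.inl) = {.inr 0, .inr 1} := by
  ext (x | i)
  · simp [h0]
  · have hfar : ∀ w ∈ S, w ≠ v → ¬ (w = v ∨ H.Adj w v) := fun w hw hwv h =>
      h.elim hwv (hS.1 hw hv)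
    have hi : i = 0 ∨ i = 1 := by fin_cases i <;> simp
    simpa [epn, pn, closedNbr, hi] using hfar

theorem exists_adj_image_inl_eq_pair_iff {D : Finset V} :
    (∃ x y, (addTwins H v).Adj x y ∧ D.image Sum.inl = {x, y}) ↔
      ∃ x y, H.Adj x y ∧ D = {x, y} := by
  constructor
  · rintro ⟨x, y, hxy, hD⟩
    obtain ⟨x, -, rfl⟩ := mem_image.1 (hD ▸ mem_insert_self x {y})
    obtain ⟨y, -, rfl⟩ := mem_image.1 (hD ▸ mem_insert_of_mem (mem_singleton_self y))
    refine ⟨x, y, hxy, image_injective (β := V ⊕ Fin 2) Sum.inl_injective ?_⟩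
    rw [hD, image_insert, image_singleton]
  · rintro ⟨x, y, hxy, rfl⟩
    exact ⟨.inl x, .inl y, hxy, by rw [image_insert, image_singleton]⟩

variable [Finite V] (H v)

noncomputable def iGraphIso : iGraph H ≃g iGraph (addTwins H v) where
  toEquiv := Equiv.ofBijective
    (fun S => ⟨S.1.image Sum.inl, isISet_iff.2 ⟨S.1, S.2, rfl⟩⟩)
    ⟨fun S T h => Subtype.ext <|
      image_injective (β := V ⊕ Fin 2) Sum.inl_injective (congrArg Subtype.val h),
     fun T => by
      obtain ⟨S, hS, hT⟩ := isISet_iff.1 T.2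
      exact ⟨⟨S, hS⟩, Subtype.ext hT.symm⟩⟩
  map_rel_iff' {S T} := by
    change (∃ x y, _ ∧ symmDiff (S.1.image Sum.inl) (T.1.image Sum.inl) = {x, y}) ↔ _
    rw [← image_symmDiff _ _ Sum.inl_injective]
    exact exists_adj_image_inl_eq_pair_iff

end addTwins

def epnEmptyPairs (G : SimpleGraph V) : Set (Finset V × V) :=
  {p | IsISet G p.1 ∧ p.2 ∈ p.1 ∧ epn G p.2 p.1 = ∅}

theorem ncard_epnEmptyPairs_addTwins_lt [Finite V] [DecidableEq V] {H : SimpleGraph V}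
    {S : Finset V} {v : V} (hS : IsISet H S) (hv : v ∈ S) (h0 : epn H v S = ∅) :
    (epnEmptyPairs (addTwins H v)).ncard < (epnEmptyPairs H).ncard := by
  have hsub : epnEmptyPairs (addTwins H v) ⊆
      (fun p => (p.1.image Sum.inl, .inl p.2)) '' (epnEmptyPairs H \ {(S, v)}) := by
    rintro ⟨T, w⟩ ⟨hT, hw, hTw⟩
    obtain ⟨T₀, hT₀, rfl⟩ := addTwins.isISet_iff.1 hT
    obtain ⟨w₀, hw₀, rfl⟩ := mem_image.1 hw
    refine ⟨(T₀, w₀), ⟨⟨hT₀, hw₀, ?_⟩, ?_⟩, rfl⟩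
    · exact Set.eq_empty_of_forall_notMem fun x hx =>
        (hTw ▸ addTwins.inl_mem_epn_image_inl.2 hx : Sum.inl x ∈ (∅ : Set _))
    · rintro ⟨⟩
      rw [addTwins.epn_inl_image_inl hS.1 hv h0] at hTw
      exact (Set.insert_nonempty _ _).ne_empty hTw
  calc (epnEmptyPairs (addTwins H v)).ncard
      ≤ ((fun p => (p.1.image Sum.inl, .inl p.2)) '' (epnEmptyPairs H \ {(S, v)})).ncard :=
        Set.ncard_le_ncard hsub
    _ ≤ (epnEmptyPairs H \ {(S, v)}).ncard := Set.ncard_image_le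
    _ < (epnEmptyPairs H).ncard := Set.ncard_sdiff_singleton_lt_of_mem ⟨hS, hv, h0⟩

theorem exists_iGraph_iso_forall_epn_nonempty (V : Type) [Fintype V] [DecidableEq V]
    (H : SimpleGraph V) :
    ∃ (W : Type) (_ : Fintype W) (_ : DecidableEq W) (G : SimpleGraph W),
      Nonempty (iGraph G ≃g iGraph H) ∧
      ∀ S : Finset W, IsISet G S → ∀ v ∈ S, (epn G v S).Nonempty := by
  induction hn : (epnEmptyPairs H).ncard using Nat.strong_induction_on generalizing V with
  | _ n ih =>
  by_cases hgood : ∀ S : Finset V, IsISet H S → ∀ v ∈ S, (epn H v S).Nonempty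
  · exact ⟨V, inferInstance, inferInstance, H, ⟨.refl⟩, hgood⟩
  simp only [not_forall, Set.not_nonempty_iff_eq_empty] at hgood
  obtain ⟨S, hS, v, hv, h0⟩ := hgood
  obtain ⟨W, _, _, G, ⟨e⟩, hG⟩ :=
    ih _ (hn ▸ ncard_epnEmptyPairs_addTwins_lt hS hv h0) (V ⊕ Fin 2) (addTwins H v) rfl
  exact ⟨W, inferInstance, inferInstance, G, ⟨e.trans (addTwins.iGraphIso H v).symm⟩, hG⟩

/-- For any graph `H` there is a graph `G` with the same `i`-graph all of whose `i`-sets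
have every vertex with nonempty external private neighbourhood; moreover if `v ∈ S` is an
`i`-set vertex with `epn(v,S) = ∅`, the graph `addTwins H v` has exactly the `i`-sets of `H`
(pushed forward along `Sum.inl`), the same `i`-number, and `epn(v,S) = {a,b}` there. -/
theorem epn_add (V : Type) [Fintype V] [DecidableEq V] (H : SimpleGraph V) :
    (∃ (W : Type) (_ : Fintype W) (_ : DecidableEq W) (G : SimpleGraph W),
       Nonempty (iGraph G ≃g iGraph H) ∧
       ∀ S : Finset W, IsISet G S → ∀ v ∈ S, (epn G v S).Nonempty) ∧
    (∀ (S : Finset V) (v : V), IsISet H S → v ∈ S → epn H v S = ∅ →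
       (∀ T : Finset (V ⊕ Fin 2),
          IsISet (addTwins H v) T ↔ ∃ T₀ : Finset V, IsISet H T₀ ∧ T = T₀.image Sum.inl) ∧
       iNum (addTwins H v) = iNum H ∧
       epn (addTwins H v) (Sum.inl v) (S.image Sum.inl) = {Sum.inr 0, Sum.inr 1}) :=
  ⟨exists_iGraph_iso_forall_epn_nonempty V H, fun _ _ hS hv h0 =>
    ⟨fun _ => addTwins.isISet_iff, addTwins.iNum_eq, addTwins.epn_inl_image_inl hS.1 hv h0⟩⟩
end
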